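/- arXiv:1805.12047 — 3 statements merged into one kernel-verified Lean document; each statement's English description precedes it below -/
import Mathlib

section
/- Let A, B be real symmetric n×n matrices such that the pencil {xA + B : x ∈ ℝ} contains a positive definite matrix. Then the polynomial det(xA + B) ∈ ℝ[x] has only real roots. -/
open MeasureTheory Polynomial

/-- The k-th moment of a measure on ℝ. -/
noncomputable def mom (μ : Measure ℝ) (k : ℕ) : ℝ := ∫ t, t ^ k ∂μ

/-- Non-degeneracy in degree d: moments up to degree 2d exist and
∫ f dμ > 0 for every nonzero nonnegative polynomial of degree ≤ 2d. -/
def NonDeg (μ : Measure ℝ) (d : ℕ) : Prop :=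
  (∀ k ≤ 2 * d, Integrable (fun t => t ^ k) μ) ∧
  ∀ f : Polynomial ℝ, f ≠ 0 → f.natDegree ≤ 2 * d → (∀ x, 0 ≤ f.eval x) →
    0 < ∫ t, f.eval t ∂μ

/-- Evaluation of a polynomial at a node in ℝ ∪ {∞}: at `some a` it is `f(a)`;
at `none` (infinity) it is the coefficient of degree D. -/
noncomputable def ev (D : ℕ) (x : Option ℝ) (f : Polynomial ℝ) : ℝ :=
  x.elim (f.coeff D) (fun a => f.eval a)

/-- The d × d Hankel-type moment matrix with (i,j) entry m_{i+j+k} (0-based). -/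
noncomputable def hank (μ : Measure ℝ) (d k : ℕ) : Matrix (Fin d) (Fin d) ℝ :=
  Matrix.of fun i j => mom μ ((i : ℕ) + (j : ℕ) + k)

/-!
If `det (z • A + B) = 0`, take `v ≠ 0` with `(z • A + B) *ᵥ v = 0` over `ℂ`. The Hermitian forms
`a = v* A v` and `b = v* B v` are real and `z * a + b = 0`; taking imaginary parts, `z.im ≠ 0`
would force `a = b = 0`, hence `v* (x₀ • A + B) v = 0`, contradicting positive definiteness of
the complexification of `x₀ • A + B`.
-/

open scoped ComplexOrder

namespace Matrix

variable {n : Type*}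

theorem IsSymm.isHermitian_map_ofReal {M : Matrix n n ℝ} (hM : M.IsSymm) :
    (M.map ((↑) : ℝ → ℂ)).IsHermitian :=
  IsHermitian.map hM _ fun r ↦ (Complex.conj_ofReal r).symm

variable [Fintype n]

theorem re_star_dotProduct_map_ofReal_mulVec (M : Matrix n n ℝ) (v : n → ℂ) :
    (star v ⬝ᵥ M.map (↑) *ᵥ v).re =
      (fun i ↦ (v i).re) ⬝ᵥ M *ᵥ (fun i ↦ (v i).re) +
        (fun i ↦ (v i).im) ⬝ᵥ M *ᵥ (fun i ↦ (v i).im) := by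
  simp only [dotProduct, mulVec, map_apply, Pi.star_apply, Finset.mul_sum, Complex.re_sum,
    ← Finset.sum_add_distrib]
  refine Finset.sum_congr rfl fun i _ ↦ Finset.sum_congr rfl fun j _ ↦ ?_
  simp only [Complex.mul_re, Complex.mul_im, Complex.star_def, Complex.conj_re, Complex.conj_im,
    Complex.ofReal_re, Complex.ofReal_im]
  ring

theorem PosDef.map_ofReal {M : Matrix n n ℝ} (hM : M.PosDef) :
    (M.map ((↑) : ℝ → ℂ)).PosDef := by
  have hMsymm : M.IsSymm := hM.isHermitian
  refine PosDef.of_dotProduct_mulVec_pos hMsymm.isHermitian_map_ofReal fun v hv ↦ ?_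
  have him := hMsymm.isHermitian_map_ofReal.im_star_dotProduct_mulVec_self v
  refine Complex.pos_iff.mpr ⟨?_, him.symm⟩
  have hre_or_im : (fun i ↦ (v i).re) ≠ 0 ∨ (fun i ↦ (v i).im) ≠ 0 := by
    contrapose! hv
    exact funext fun i ↦ Complex.ext (congrFun hv.1 i) (congrFun hv.2 i)
  rw [re_star_dotProduct_map_ofReal_mulVec]
  have hpos {x : n → ℝ} (hx : x ≠ 0) : 0 < x ⬝ᵥ M *ᵥ x := by
    simpa using hM.dotProduct_mulVec_pos hx
  have hnonneg (x : n → ℝ) : 0 ≤ x ⬝ᵥ M *ᵥ x := by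
    simpa using hM.posSemidef.dotProduct_mulVec_nonneg x
  rcases hre_or_im with h | h
  · exact add_pos_of_pos_of_nonneg (hpos h) (hnonneg _)
  · exact add_pos_of_nonneg_of_pos (hnonneg _) (hpos h)

variable [DecidableEq n]

theorem aeval_det_of_C_mul_X_add_C {R S : Type*} [CommRing R] [CommRing S] [Algebra R S]
    (A B : Matrix n n R) (z : S) :
    aeval z (det (of fun i j ↦ C (A i j) * X + C (B i j))) =
      det (z • A.map (algebraMap R S) + B.map (algebraMap R S)) := by
  rw [AlgHom.map_det]
  congr 1
  ext i j
  simp only [AlgHom.mapMatrix_apply, map_apply, of_apply, map_add, map_mul, aeval_C, aeval_X,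
    add_apply, smul_apply, smul_eq_mul]
  ring

theorem IsHermitian.im_eq_zero_of_det_smul_add_eq_zero {A B : Matrix n n ℂ} (hA : A.IsHermitian)
    (hB : B.IsHermitian) {x₀ : ℝ} (hpd : ((x₀ : ℂ) • A + B).PosDef) {z : ℂ}
    (hz : det (z • A + B) = 0) : z.im = 0 := by
  by_contra hz_im
  obtain ⟨v, hv, hzv⟩ := exists_mulVec_eq_zero_iff.mpr hz
  set a := star v ⬝ᵥ A *ᵥ v
  set b := star v ⬝ᵥ B *ᵥ v
  have ha_im : a.im = 0 := hA.im_star_dotProduct_mulVec_self v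
  have hb_im : b.im = 0 := hB.im_star_dotProduct_mulVec_self v
  have hquad (w : ℂ) : star v ⬝ᵥ (w • A + B) *ᵥ v = w * a + b := by
    simp only [add_mulVec, smul_mulVec, dotProduct_add, dotProduct_smul, smul_eq_mul, a, b]
  have hzab : z * a + b = 0 := by rw [← hquad, hzv, dotProduct_zero]
  have ha : a = 0 := by
    have h := congrArg Complex.im hzab
    simp only [Complex.add_im, Complex.mul_im, ha_im, hb_im, mul_zero, add_zero, zero_add,
      Complex.zero_im] at h
    exact Complex.ext ((mul_eq_zero.mp h).resolve_left hz_im) ha_im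
  have hb : b = 0 := by simpa [ha] using hzab
  have hpos := hpd.dotProduct_mulVec_pos hv
  rw [hquad, ha, hb, mul_zero, add_zero] at hpos
  exact lt_irrefl 0 hpos

end Matrix

/-- If A, B are real symmetric n×n matrices and the pencil {xA + B} contains a positive
definite matrix, then det(xA + B) has only real roots. -/
theorem stmt7 (n : ℕ) (A B : Matrix (Fin n) (Fin n) ℝ) (hA : A.IsSymm) (hB : B.IsSymm)
    (x₀ : ℝ) (hpd : (x₀ • A + B).PosDef) :
    ∀ z : ℂ, Polynomial.aeval z
      (Matrix.det (Matrix.of fun i j : Fin n =>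
        Polynomial.C (A i j) * Polynomial.X + Polynomial.C (B i j))) = 0 →
      z.im = 0 := by
  intro z hz
  rw [Matrix.aeval_det_of_C_mul_X_add_C, Complex.coe_algebraMap] at hz
  refine hA.isHermitian_map_ofReal.im_eq_zero_of_det_smul_add_eq_zero
    hB.isHermitian_map_ofReal (x₀ := x₀) ?_ hz
  simpa [Matrix.map_add, Matrix.map_smul] using hpd.map_ofReal
end

section
/- Let μ be non-degenerate in degree d ≥ 1. Then the polynomial F_∞(x) = det(x M_{d−1} − M'_{d−1}) has d real roots s_1,…,s_d (with multiplicity), and there exist positive weights w_1,…,w_d and w_∞ such that ∫f dμ = w_∞ ev_∞^{2d}(f) + Σ_{i=1}^d w_i f(s_i) for all f of degree ≤ 2d, i.e., there is a quadrature rule of degree 2d with nodes s_1,…,s_d, ∞. -/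
open MeasureTheory Polynomial

/-!
The moment functional `L f = ∫ f dμ` is positive on nonzero squares of degree `≤ d`, so the Hankel
matrix `M_{d-1}` is positive definite and there is a monic `p` of degree `d` that is `L`-orthogonal
to all polynomials of lower degree. In the basis `1, X, …, X^{d-1}` of `ℝ[X]/(p)`, multiplication
by `X` has matrix `M_{d-1}⁻¹ M'_{d-1}`, so by Cayley–Hamilton its characteristic polynomial is `p`,
and `F_∞ = det M_{d-1} · p`. Conjugating by `√M_{d-1}` makes that matrix symmetric, hence `p` has
`d` real roots `s_i`; they are simple, since a double root would write `p h` as a nonzero square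
with `deg h < d`. Gauss quadrature at the `s_i` is then exact in degree `< 2d`, with weights
`w_i = L ℓ_i = L ℓ_i² > 0` (`ℓ_i` the Lagrange basis), and subtracting `f_{2d} p²` covers
degree `2d` with `w_∞ = L p² > 0`.
-/

open Finset Matrix

section LinearFunctional

variable {K : Type*} [Field K]

theorem LinearMap.map_C_mul (L : K[X] →ₗ[K] K) (a : K) (p : K[X]) : L (C a * p) = a * L p := by
  rw [← smul_eq_C_mul, map_smul, smul_eq_mul]

theorem LinearMap.map_mul_eq_sum_coeff (L : K[X] →ₗ[K] K) (p : K[X]) {q : K[X]} {n : ℕ}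
    (hq : q.degree < n) : L (p * q) = ∑ j : Fin n, q.coeff j * L (p * X ^ (j : ℕ)) := by
  rw [sum_fin (fun j a => a * L (p * X ^ j)) (by simp) hq]
  conv_lhs => rw [← q.sum_monomial_eq]
  simp only [Polynomial.sum_def, mul_sum, map_sum, ← C_mul_X_pow_eq_monomial, mul_left_comm p,
    L.map_C_mul]

def IsOrthogonalToLowerDegree (L : K[X] →ₗ[K] K) (P : K[X]) : Prop :=
  ∀ q : K[X], q.degree < P.degree → L (P * q) = 0

end LinearFunctional

section Division

variable {K : Type*} [Field K] {P : K[X]}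

theorem degree_divByMonic_lt_natDegree (hP : P.Monic) {g : K[X]}
    (hg : g.degree < (2 * P.natDegree : ℕ)) : (g /ₘ P).degree < P.natDegree := by
  by_cases hq : g /ₘ P = 0
  · simp [hq]
  have hg0 : g ≠ 0 := by rintro rfl; simp at hq
  have hg' : g.natDegree < 2 * P.natDegree := (natDegree_lt_iff_degree_lt hg0).2 hg
  refine degree_le_natDegree.trans_lt ?_
  rw [natDegree_divByMonic _ hP]
  exact_mod_cast (by omega : g.natDegree - P.natDegree < P.natDegree)

theorem degree_sub_C_coeff_mul_mul_self_lt (hP : P.Monic) {f : K[X]}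
    (hf : f.natDegree ≤ 2 * P.natDegree) :
    (f - C (f.coeff (2 * P.natDegree)) * (P * P)).degree < (2 * P.natDegree : ℕ) := by
  have hPP : (P * P).natDegree = 2 * P.natDegree := by rw [hP.natDegree_mul hP, two_mul]
  rw [degree_lt_iff_coeff_zero]
  intro m hm
  rw [coeff_sub, coeff_C_mul]
  rcases hm.eq_or_lt with rfl | hm
  · rw [← hPP, (hP.mul hP).coeff_natDegree, mul_one, sub_self]
  · have hPPm : (P * P).natDegree < m := hPP ▸ hm
    rw [coeff_eq_zero_of_natDegree_lt (hf.trans_lt hm), coeff_eq_zero_of_natDegree_lt hPPm,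
      mul_zero, sub_zero]

theorem X_mul_modByMonic_eq (hP : P.Monic) {r : K[X]} (hr : r.degree < P.degree) :
    ∃ c : K, (X * r) %ₘ P = X * r - C c * P := by
  refine ⟨((X * r) /ₘ P).coeff 0, ?_⟩
  have hq : ((X * r) /ₘ P).natDegree = 0 := by
    rw [natDegree_divByMonic _ hP, Nat.sub_eq_zero_iff_le]
    by_cases hr0 : r = 0
    · simp [hr0]
    rw [natDegree_X_mul hr0]
    exact natDegree_lt_natDegree hr0 hr
  rw [← eq_C_of_natDegree_eq_zero hq, eq_sub_iff_add_eq, mul_comm _ P, modByMonic_add_div]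

end Division

section Quadrature

open Lagrange

variable {K ι : Type*} [Field K] [Fintype ι] {L : K[X] →ₗ[K] K} {s : ι → K}

theorem natDegree_nodal_univ : (nodal univ s).natDegree = Fintype.card ι := by
  rw [natDegree_nodal, card_univ]

variable [DecidableEq ι]

theorem injective_of_isOrthogonalToLowerDegree_nodal [Preorder K]
    (hpos : ∀ p : K[X], p ≠ 0 → p.natDegree ≤ Fintype.card ι → 0 < L (p * p))
    (horth : IsOrthogonalToLowerDegree L (nodal univ s)) : Function.Injective s := by
  intro i j hij
  by_contra hne
  set h := ∏ k ∈ (univ.erase i).erase j, (X - C (s k))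
  have hN : nodal univ s = (X - C (s i)) * ((X - C (s j)) * h) := by
    rw [nodal, ← mul_prod_erase univ _ (mem_univ i),
      ← mul_prod_erase _ _ (mem_erase.2 ⟨Ne.symm hne, mem_univ j⟩)]
  have hh : h.Monic := monic_prod_of_monic _ _ fun k _ => monic_X_sub_C (s k)
  have hdeg : (nodal univ s).natDegree = h.natDegree + 2 := by
    rw [hN, (monic_X_sub_C _).natDegree_mul ((monic_X_sub_C _).mul hh),
      (monic_X_sub_C _).natDegree_mul hh, natDegree_X_sub_C, natDegree_X_sub_C]
    ring
  have hu : ((X - C (s i)) * h).natDegree ≤ Fintype.card ι := by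
    rw [(monic_X_sub_C _).natDegree_mul hh, natDegree_X_sub_C, ← natDegree_nodal_univ (s := s)]
    omega
  -- a double root turns `nodal * h` into the nonzero square `((X - s i) * h) ^ 2`
  have hsq : (X - C (s i)) * h * ((X - C (s i)) * h) = nodal univ s * h := by rw [hN, hij]; ring
  have hpos' := hpos _ ((monic_X_sub_C _).mul hh).ne_zero hu
  rw [hsq, horth h (degree_le_natDegree.trans_lt ?_)] at hpos'
  · exact lt_irrefl _ hpos'
  · rw [degree_eq_natDegree nodal_monic.ne_zero]
    exact_mod_cast (by omega : h.natDegree < (nodal univ s).natDegree)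

theorem gauss_quadrature (hs : Function.Injective s)
    (horth : IsOrthogonalToLowerDegree L (nodal univ s)) {g : K[X]}
    (hg : g.degree < (2 * Fintype.card ι : ℕ)) :
    L g = ∑ i, L (Lagrange.basis univ s i) * g.eval (s i) := by
  have hrem : g %ₘ nodal univ s = interpolate univ s fun i => g.eval (s i) := by
    refine eq_interpolate_of_eval_eq _ hs.injOn ?_ fun i hi => ?_
    · exact (degree_modByMonic_lt g nodal_monic).trans_eq degree_nodal
    · rw [modByMonic_eq_sub_mul_div, eval_sub, eval_mul, eval_nodal_at_node hi, zero_mul, sub_zero]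
  rw [← natDegree_nodal_univ (s := s)] at hg
  conv_lhs => rw [← modByMonic_add_div g (nodal univ s)]
  rw [map_add, horth _ ((degree_divByMonic_lt_natDegree nodal_monic hg).trans_eq
    (degree_eq_natDegree nodal_monic.ne_zero).symm), add_zero, hrem, interpolate_apply, map_sum]
  exact sum_congr rfl fun i _ => by rw [L.map_C_mul, mul_comm]

theorem quadrature_of_natDegree_le (hs : Function.Injective s)
    (horth : IsOrthogonalToLowerDegree L (nodal univ s)) {f : K[X]}
    (hf : f.natDegree ≤ 2 * Fintype.card ι) :
    L f = L (nodal univ s * nodal univ s) * f.coeff (2 * Fintype.card ι)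
      + ∑ i, L (Lagrange.basis univ s i) * f.eval (s i) := by
  have hdeg := degree_sub_C_coeff_mul_mul_self_lt (nodal_monic (s := univ) (v := s))
    (natDegree_nodal_univ (s := s) ▸ hf)
  rw [natDegree_nodal_univ] at hdeg
  have hg := gauss_quadrature hs horth hdeg
  have hgs : ∀ i, (f - C (f.coeff (2 * Fintype.card ι)) *
      (nodal univ s * nodal univ s)).eval (s i) = f.eval (s i) := fun i => by
    simp [eval_nodal_at_node (mem_univ i)]
  simp only [hgs, map_sub, L.map_C_mul] at hg
  linear_combination hg

theorem map_basis_eq_map_basis_mul_self (hs : Function.Injective s)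
    (horth : IsOrthogonalToLowerDegree L (nodal univ s)) (i : ι) :
    L (Lagrange.basis univ s i) = L (Lagrange.basis univ s i * Lagrange.basis univ s i) := by
  have hdeg : (Lagrange.basis univ s i).natDegree = Fintype.card ι - 1 := by
    rw [natDegree_basis hs.injOn (mem_univ i), card_univ]
  have hcard : 0 < Fintype.card ι := Fintype.card_pos_iff.2 ⟨i⟩
  have hsq : (Lagrange.basis univ s i * Lagrange.basis univ s i).degree
      < (2 * Fintype.card ι : ℕ) :=
    degree_le_natDegree.trans_lt
      (by exact_mod_cast natDegree_mul_le.trans_lt (by rw [hdeg]; omega))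
  rw [gauss_quadrature hs horth hsq, sum_eq_single i]
  · rw [eval_mul, eval_basis_self hs.injOn (mem_univ i), mul_one, mul_one]
  · intro j _ hji
    rw [eval_mul, eval_basis_of_ne hji.symm (mem_univ j), zero_mul, mul_zero]
  · simp

end Quadrature

section Charpoly

variable {K : Type*} [Field K] {d : ℕ}

noncomputable def remCoeffs (P : K[X]) (d : ℕ) : K[X] →ₗ[K] Fin d → K :=
  LinearMap.pi (fun j : Fin d => lcoeff K j) ∘ₗ modByMonicHom P

theorem remCoeffs_mul_eq_aeval_mulVec {P : K[X]} {T : Matrix (Fin d) (Fin d) K}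
    (hT : ∀ f, remCoeffs P d (X * f) = T *ᵥ remCoeffs P d f) (g f : K[X]) :
    remCoeffs P d (g * f) = aeval T g *ᵥ remCoeffs P d f := by
  have hpow : ∀ n f, remCoeffs P d (X ^ n * f) = (T ^ n) *ᵥ remCoeffs P d f := by
    intro n
    induction n with
    | zero => simp
    | succ n ih => intro f; rw [pow_succ', mul_assoc, hT, ih, mulVec_mulVec, pow_succ']
  induction g using Polynomial.induction_on' with
  | add p q hp hq => rw [add_mul, map_add, hp, hq, map_add, add_mulVec]
  | monomial n a =>
    rw [← C_mul_X_pow_eq_monomial, mul_assoc, ← smul_eq_C_mul, map_smul, hpow, ← smul_eq_C_mul,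
      map_smul, aeval_X_pow, smul_mulVec]

theorem charpoly_eq_of_remCoeffs_X_mul {P : K[X]} (hP : P.Monic) (hPd : P.natDegree = d)
    {T : Matrix (Fin d) (Fin d) K} (hT : ∀ f, remCoeffs P d (X * f) = T *ᵥ remCoeffs P d f) :
    T.charpoly = P := by
  have h0 : remCoeffs P d T.charpoly = 0 := by
    simpa [aeval_self_charpoly] using remCoeffs_mul_eq_aeval_mulVec hT T.charpoly 1
  have hrem : T.charpoly %ₘ P = 0 := by
    ext m
    rw [coeff_zero]
    by_cases hm : m < d
    · exact congrFun h0 ⟨m, hm⟩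
    · refine coeff_eq_zero_of_degree_lt ((degree_modByMonic_lt _ hP).trans_le ?_)
      rw [degree_eq_natDegree hP.ne_zero, hPd]
      exact_mod_cast not_lt.1 hm
  refine eq_of_monic_of_dvd_of_natDegree_le hP T.charpoly_monic
    ((modByMonic_eq_zero_iff_dvd hP).1 hrem) ?_
  rw [charpoly_natDegree_eq_dim, Fintype.card_fin, hPd]

end Charpoly

theorem det_C_mul_X_sub_C_eq {K n : Type*} [Field K] [Fintype n] [DecidableEq n]
    {A B : Matrix n n K} (hA : IsUnit A.det) :
    (Matrix.of fun i j => C (A i j) * X - C (B i j)).det = C A.det * (A⁻¹ * B).charpoly := by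
  have h : Matrix.of (fun i j => C (A i j) * X - C (B i j))
      = (C : K →+* K[X]).mapMatrix A * charmatrix (A⁻¹ * B) := by
    rw [charmatrix, mul_sub, ← map_mul, mul_nonsing_inv_cancel_left _ _ hA]
    ext i j
    simp [scalar_apply, mul_diagonal]
  rw [h, det_mul, ← RingHom.map_det, charpoly]

open scoped MatrixOrder in
theorem exists_charpoly_inv_mul_eq_prod {n : Type*} [Fintype n] [DecidableEq n]
    {A B : Matrix n n ℝ} (hA : A.PosSemidef) (hB : B.IsHermitian) :
    ∃ s : n → ℝ, (A⁻¹ * B).charpoly = ∏ i, (X - C (s i)) := by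
  set S := CFC.sqrt A
  have hS : S.IsHermitian := (nonneg_iff_posSemidef.1 (CFC.sqrt_nonneg A)).1
  have hSS : S * S = A := CFC.sqrt_mul_sqrt_self A (nonneg_iff_posSemidef.2 hA)
  have hH : (S⁻¹ * B * S⁻¹).IsHermitian := by
    have h := isHermitian_conjTranspose_mul_mul S⁻¹ hB
    rwa [hS.inv.eq] at h
  refine ⟨hH.eigenvalues, ?_⟩
  rw [← hSS, Matrix.mul_inv_rev, mul_assoc, charpoly_mul_comm, hH.charpoly_eq]
  simp

section Moments

variable {μ : Measure ℝ} {d : ℕ}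

noncomputable def momentFunctional (μ : Measure ℝ) : ℝ[X] →ₗ[ℝ] ℝ :=
  lsum fun k => LinearMap.mulRight ℝ (mom μ k)

theorem momentFunctional_apply (p : ℝ[X]) :
    momentFunctional μ p = p.sum fun k a => a * mom μ k := rfl

theorem momentFunctional_X_pow (n : ℕ) : momentFunctional μ (X ^ n) = mom μ n := by
  rw [momentFunctional_apply, X_pow_eq_monomial, sum_monomial_index _ _ (by simp), one_mul]

theorem integral_eval_eq_momentFunctional {N : ℕ}
    (hint : ∀ k ≤ N, Integrable (fun t : ℝ => t ^ k) μ) {f : ℝ[X]} (hf : f.natDegree ≤ N) :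
    ∫ t, f.eval t ∂μ = momentFunctional μ f := by
  simp only [eval_eq_sum, momentFunctional_apply, Polynomial.sum_def]
  rw [integral_finsetSum _ fun k hk =>
    (hint k ((le_natDegree_of_mem_supp k hk).trans hf)).const_mul _]
  exact sum_congr rfl fun k _ => integral_const_mul _ _

theorem NonDeg.momentFunctional_mul_self_pos (hnd : NonDeg μ d) {p : ℝ[X]} (hp : p ≠ 0)
    (hpd : p.natDegree ≤ d) : 0 < momentFunctional μ (p * p) := by
  have hdeg : (p * p).natDegree ≤ 2 * d := natDegree_mul_le.trans (by omega)
  rw [← integral_eval_eq_momentFunctional hnd.1 hdeg]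
  exact hnd.2 _ (mul_ne_zero hp hp) hdeg fun t => by rw [eval_mul]; exact mul_self_nonneg _

theorem hank_isHermitian (μ : Measure ℝ) (d k : ℕ) : (hank μ d k).IsHermitian := by
  ext i j
  simp [hank, add_right_comm _ (j : ℕ), add_comm (j : ℕ)]

theorem hank_mulVec_coeff {p : ℝ[X]} (hp : p.degree < d) (k : ℕ) (i : Fin d) :
    (hank μ d k *ᵥ fun j => p.coeff j) i = momentFunctional μ (X ^ ((i : ℕ) + k) * p) := by
  rw [LinearMap.map_mul_eq_sum_coeff _ _ hp]
  simp only [mulVec, dotProduct, hank, of_apply, ← pow_add, momentFunctional_X_pow]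
  exact sum_congr rfl fun j _ => by rw [mul_comm, add_right_comm]

theorem NonDeg.hank_posDef (hnd : NonDeg μ d) : (hank μ d 0).PosDef := by
  refine PosDef.of_dotProduct_mulVec_pos (hank_isHermitian μ d 0) fun x hx => ?_
  set p : ℝ[X] := ((degreeLTEquiv ℝ d).symm x).val
  have hp : p.degree < d := mem_degreeLT.1 ((degreeLTEquiv ℝ d).symm x).2
  have hpx : (fun j : Fin d => p.coeff j) = x := (degreeLTEquiv ℝ d).apply_symm_apply x
  have hp0 : p ≠ 0 := by
    rintro h
    exact hx (by rw [← hpx, h]; rfl)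
  have hquad : star x ⬝ᵥ (hank μ d 0 *ᵥ x) = momentFunctional μ (p * p) := by
    rw [star_trivial, ← hpx, LinearMap.map_mul_eq_sum_coeff _ _ hp]
    simp only [dotProduct, hank_mulVec_coeff hp, add_zero, mul_comm p]
  rw [hquad]
  exact hnd.momentFunctional_mul_self_pos hp0 (natDegree_le_iff_degree_le.2 hp.le)

-- Its coefficients solve the normal equations `M_{d-1} c = (m_{i+d})_i`.
noncomputable def orthProjXPow (μ : Measure ℝ) (d : ℕ) : ℝ[X] :=
  ((degreeLTEquiv ℝ d).symm ((hank μ d 0)⁻¹ *ᵥ fun i => mom μ (i + d))).val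

noncomputable def orthPoly (μ : Measure ℝ) (d : ℕ) : ℝ[X] := X ^ d - orthProjXPow μ d

theorem degree_orthProjXPow_lt : (orthProjXPow μ d).degree < d :=
  mem_degreeLT.1 (Subtype.prop _)

theorem coeff_orthProjXPow :
    (fun j : Fin d => (orthProjXPow μ d).coeff j) = (hank μ d 0)⁻¹ *ᵥ fun i => mom μ (i + d) :=
  (degreeLTEquiv ℝ d).apply_symm_apply _

theorem orthPoly_monic : (orthPoly μ d).Monic :=
  monic_X_pow_sub degree_orthProjXPow_lt

theorem degree_orthPoly : (orthPoly μ d).degree = d := by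
  rw [orthPoly, degree_sub_eq_left_of_degree_lt] <;> rw [degree_X_pow]
  exact degree_orthProjXPow_lt

theorem NonDeg.isOrthogonalToLowerDegree_orthPoly (hnd : NonDeg μ d) :
    IsOrthogonalToLowerDegree (momentFunctional μ) (orthPoly μ d) := by
  intro q hq
  rw [degree_orthPoly] at hq
  rw [LinearMap.map_mul_eq_sum_coeff _ _ hq]
  refine sum_eq_zero fun i _ => ?_
  have hproj : (hank μ d 0 *ᵥ fun j : Fin d => (orthProjXPow μ d).coeff j)
      = fun i : Fin d => mom μ (i + d) := by
    rw [coeff_orthProjXPow, mulVec_mulVec, mul_nonsing_inv _ hnd.hank_posDef.det_pos.ne'.isUnit,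
      one_mulVec]
  have hi := congrFun hproj i
  rw [hank_mulVec_coeff degree_orthProjXPow_lt, add_zero] at hi
  rw [orthPoly, sub_mul, map_sub, ← pow_add, momentFunctional_X_pow, mul_comm (orthProjXPow μ d),
    hi, add_comm, sub_self, mul_zero]

theorem NonDeg.remCoeffs_X_mul_orthPoly (hnd : NonDeg μ d) (f : ℝ[X]) :
    remCoeffs (orthPoly μ d) d (X * f)
      = ((hank μ d 0)⁻¹ * hank μ d 1) *ᵥ remCoeffs (orthPoly μ d) d f := by
  have hdeg : ∀ g : ℝ[X], (g %ₘ orthPoly μ d).degree < d := fun g =>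
    degree_orthPoly (μ := μ) ▸ degree_modByMonic_lt g orthPoly_monic
  have hXf : (X * f) %ₘ orthPoly μ d = (X * (f %ₘ orthPoly μ d)) %ₘ orthPoly μ d := by
    refine modByMonic_eq_of_dvd_sub orthPoly_monic ?_
    rw [← mul_sub]
    exact dvd_mul_of_dvd_right (dvd_sub_comm.1 (dvd_modByMonic_sub f _)) X
  obtain ⟨c, hc⟩ := X_mul_modByMonic_eq orthPoly_monic (degree_orthPoly (μ := μ) ▸ hdeg f)
  have hM : hank μ d 0 *ᵥ remCoeffs (orthPoly μ d) d (X * f)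
      = hank μ d 1 *ᵥ remCoeffs (orthPoly μ d) d f := by
    funext i
    calc (hank μ d 0 *ᵥ remCoeffs (orthPoly μ d) d (X * f)) i
        = momentFunctional μ (X ^ ((i : ℕ) + 0) * ((X * f) %ₘ orthPoly μ d)) :=
          hank_mulVec_coeff (hdeg _) 0 i
      _ = momentFunctional μ (X ^ ((i : ℕ) + 1) * (f %ₘ orthPoly μ d))
            - c * momentFunctional μ (orthPoly μ d * X ^ (i : ℕ)) := by
        rw [hXf, hc, ← LinearMap.map_C_mul, ← map_sub]
        ring_nf
      _ = (hank μ d 1 *ᵥ remCoeffs (orthPoly μ d) d f) i := by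
        rw [hnd.isOrthogonalToLowerDegree_orthPoly _ (by
          rw [degree_orthPoly, degree_X_pow]; exact_mod_cast i.2), mul_zero, sub_zero]
        exact (hank_mulVec_coeff (hdeg f) 1 i).symm
  rw [← mulVec_mulVec, ← hM, mulVec_mulVec, nonsing_inv_mul _ hnd.hank_posDef.det_pos.ne'.isUnit,
    one_mulVec]

theorem NonDeg.charpoly_hank_inv_mul_hank (hnd : NonDeg μ d) :
    ((hank μ d 0)⁻¹ * hank μ d 1).charpoly = orthPoly μ d :=
  charpoly_eq_of_remCoeffs_X_mul orthPoly_monic (natDegree_eq_of_degree_eq_some degree_orthPoly)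
    hnd.remCoeffs_X_mul_orthPoly

end Moments

theorem stmt9_general (μ : Measure ℝ) (d : ℕ) (hnd : NonDeg μ d) :
    ∃ (s : Fin d → ℝ) (w : Fin d → ℝ) (winf : ℝ),
      (Matrix.det (Matrix.of fun i j : Fin d =>
          Polynomial.C (mom μ ((i : ℕ) + (j : ℕ))) * Polynomial.X
          - Polynomial.C (mom μ ((i : ℕ) + (j : ℕ) + 1)))
        = Polynomial.C (hank μ d 0).det * ∏ i, (Polynomial.X - Polynomial.C (s i))) ∧
      (∀ i, 0 < w i) ∧ 0 < winf ∧
      ∀ f : Polynomial ℝ, f.natDegree ≤ 2 * d →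
        ∫ t, f.eval t ∂μ = winf * f.coeff (2 * d) + ∑ i, w i * f.eval (s i) := by
  set L := momentFunctional μ
  have hM := hnd.hank_posDef
  obtain ⟨s, hs⟩ := exists_charpoly_inv_mul_eq_prod hM.posSemidef (hank_isHermitian μ d 1)
  have hP : orthPoly μ d = Lagrange.nodal univ s := by
    rw [← hnd.charpoly_hank_inv_mul_hank, hs, Lagrange.nodal]
  have hpos : ∀ p : ℝ[X], p ≠ 0 → p.natDegree ≤ Fintype.card (Fin d) → 0 < L (p * p) :=
    fun p hp hpd => hnd.momentFunctional_mul_self_pos hp (by simpa using hpd)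
  have horth : IsOrthogonalToLowerDegree L (Lagrange.nodal univ s) :=
    hP ▸ hnd.isOrthogonalToLowerDegree_orthPoly
  have hinj := injective_of_isOrthogonalToLowerDegree_nodal hpos horth
  have hw : ∀ i, 0 < L (Lagrange.basis univ s i) := fun i => by
    rw [map_basis_eq_map_basis_mul_self hinj horth]
    exact hpos _ (Lagrange.basis_ne_zero hinj.injOn (mem_univ i))
      (by simp [Lagrange.natDegree_basis hinj.injOn (mem_univ i)])
  have hwinf : 0 < L (Lagrange.nodal univ s * Lagrange.nodal univ s) :=
    hpos _ Lagrange.nodal_monic.ne_zero natDegree_nodal_univ.le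
  refine ⟨s, _, _, (det_C_mul_X_sub_C_eq (B := hank μ d 1) hM.det_pos.ne'.isUnit).trans
    (by rw [hs]), hw, hwinf, fun f hf => ?_⟩
  rw [integral_eval_eq_momentFunctional hnd.1 hf,
    quadrature_of_natDegree_le hinj horth (by simpa using hf), Fintype.card_fin]

/-- For μ non-degenerate in degree d ≥ 1, the polynomial F_∞(x) = det(x M_{d-1} - M'_{d-1})
has d real roots s₁,…,s_d (with multiplicity), and there is a quadrature rule of degree 2d
with nodes s₁,…,s_d and ∞, i.e. positive weights w_i and w_∞ with
∫ f dμ = w_∞ · (coeff of t^{2d} in f) + Σ w_i f(s_i). -/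
theorem stmt9 (μ : Measure ℝ) (d : ℕ) (hd : 1 ≤ d) (hnd : NonDeg μ d) :
    ∃ (s : Fin d → ℝ) (w : Fin d → ℝ) (winf : ℝ),
      (Matrix.det (Matrix.of fun i j : Fin d =>
          Polynomial.C (mom μ ((i : ℕ) + (j : ℕ))) * Polynomial.X
          - Polynomial.C (mom μ ((i : ℕ) + (j : ℕ) + 1)))
        = Polynomial.C (hank μ d 0).det * ∏ i, (Polynomial.X - Polynomial.C (s i))) ∧
      (∀ i, 0 < w i) ∧ 0 < winf ∧
      ∀ f : Polynomial ℝ, f.natDegree ≤ 2 * d →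
        ∫ t, f.eval t ∂μ = winf * f.coeff (2 * d) + ∑ i, w i * f.eval (s i) :=
  stmt9_general μ d hnd
end

section
/- Let μ be non-degenerate in degree d ≥ 1 and suppose there is a quadrature rule ∫f dμ = w_∞ ev_∞^{2d}(f) + Σ_{i=1}^d w_i f(s_i) of degree 2d with node at infinity. Then the weight at infinity is w_∞ = det(M_d)/det(M_{d−1}). -/
open MeasureTheory Polynomial

/-!
Let `p = ∏ (X - s_i)` be the monic node polynomial and `c` its coefficient vector, whose last
entry is `1`. On polynomials of degree `≤ 2d` the integral agrees with the functional
`L f = w_∞ coeff_{2d} f + ∑ w_i f(s_i)`, so `M_d` is the Hankel matrix of `L` and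
`(M_d c)_i = L(X^i p) = w_∞ [i = d]`, since `p` vanishes at the nodes. Cramer's rule for this
system gives `det M_d = w_∞ det M_{d-1}`, and `det M_{d-1} ≠ 0` because the quadratic form of
`M_{d-1}` is `q ↦ ∫ q² dμ`, which is positive by non-degeneracy.
-/

open scoped Matrix

theorem Matrix.det_eq_mul_det_submatrix_castSucc {R : Type*} [CommRing R] {n : ℕ}
    (M : Matrix (Fin (n + 1)) (Fin (n + 1)) R) {c : Fin (n + 1) → R} {a : R}
    (hc : c (Fin.last n) = 1) (hMc : M *ᵥ c = Pi.single (Fin.last n) a) :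
    M.det = a * (M.submatrix Fin.castSucc Fin.castSucc).det := by
  have hadj : M.det • c = M.adjugate *ᵥ Pi.single (Fin.last n) a := by
    rw [← hMc, Matrix.mulVec_mulVec, Matrix.adjugate_mul, Matrix.smul_mulVec, Matrix.one_mulVec]
  have hlast := congrFun hadj (Fin.last n)
  rw [Pi.smul_apply, hc, smul_eq_mul, mul_one, Matrix.mulVec_single] at hlast
  rw [hlast]
  simp [Matrix.adjugate_fin_succ_eq_det_submatrix, ← two_mul, mul_comm]

section Hankel

variable {R : Type*} [CommRing R]

noncomputable def hankelMatrix (L : R[X] →ₗ[R] R) (n : ℕ) : Matrix (Fin n) (Fin n) R :=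
  Matrix.of fun i j => L (X ^ ((i : ℕ) + j))

variable (L : R[X] →ₗ[R] R) {n : ℕ}

theorem hankelMatrix_submatrix_castSucc :
    (hankelMatrix L (n + 1)).submatrix Fin.castSucc Fin.castSucc = hankelMatrix L n := by
  ext i j
  simp [hankelMatrix]

theorem hankelMatrix_mulVec_equivFun (p : R[X]_n) (i : Fin n) :
    (hankelMatrix L n *ᵥ (degreeLT.basis R n).equivFun p) i = L (X ^ (i : ℕ) * (p : R[X])) := by
  conv_rhs => rw [← (degreeLT.basis R n).sum_equivFun p]
  simp [Matrix.mulVec, dotProduct, hankelMatrix, Finset.mul_sum, pow_add, mul_comm]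

theorem equivFun_dotProduct_hankelMatrix_mulVec (p : R[X]_n) :
    (degreeLT.basis R n).equivFun p ⬝ᵥ (hankelMatrix L n *ᵥ (degreeLT.basis R n).equivFun p)
      = L ((p : R[X]) ^ 2) := by
  simp only [dotProduct, hankelMatrix_mulVec_equivFun]
  conv_rhs => rw [sq]; enter [2, 1]; rw [← (degreeLT.basis R n).sum_equivFun p]
  simp [Finset.sum_mul]

theorem hankelMatrix_det_ne_zero [IsDomain R]
    (h : ∀ p : R[X]_n, p ≠ 0 → L ((p : R[X]) ^ 2) ≠ 0) :
    (hankelMatrix L n).det ≠ 0 := by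
  intro hdet
  obtain ⟨v, hv, hHv⟩ := Matrix.exists_mulVec_eq_zero_iff.2 hdet
  set p := (degreeLT.basis R n).equivFun.symm v
  refine h p ((degreeLT.basis R n).equivFun.symm.map_ne_zero_iff.2 hv) ?_
  rw [← equivFun_dotProduct_hankelMatrix_mulVec, LinearEquiv.apply_symm_apply, hHv,
    dotProduct_zero]

end Hankel

section Quadrature

variable {R : Type*} [CommRing R] {ι : Type*} [Fintype ι]

theorem natDegree_nodal_univ_s10 [Nontrivial R] {d : ℕ} (hι : Fintype.card ι = d) (s : ι → R) :
    (Lagrange.nodal Finset.univ s).natDegree = d := by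
  rw [Lagrange.natDegree_nodal, Finset.card_univ, hι]

noncomputable def quadratureFunctional (D : ℕ) (winf : R) (s w : ι → R) : R[X] →ₗ[R] R :=
  winf • lcoeff R D + ∑ i, w i • leval (s i)

theorem quadratureFunctional_X_pow_mul_nodal [Nontrivial R] {d : ℕ} (hι : Fintype.card ι = d)
    (winf : R) (s w : ι → R) {i : ℕ} (hi : i ≤ d) :
    quadratureFunctional (2 * d) winf s w (X ^ i * Lagrange.nodal Finset.univ s)
      = if i = d then winf else 0 := by
  have hdeg := natDegree_nodal_univ_s10 hι s
  have hcoeff : (Lagrange.nodal Finset.univ s).coeff (2 * d - i) = if i = d then 1 else 0 := by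
    split_ifs with h
    · rw [h, show 2 * d - d = d by omega, ← hdeg, Lagrange.nodal_monic.coeff_natDegree]
    · exact coeff_eq_zero_of_natDegree_lt (by omega)
  simp [quadratureFunctional, coeff_X_pow_mul', show i ≤ 2 * d by omega, hcoeff,
    Lagrange.eval_nodal_at_node]

theorem det_hankelMatrix_quadratureFunctional [Nontrivial R] {d : ℕ} (hι : Fintype.card ι = d)
    (winf : R) (s w : ι → R) :
    (hankelMatrix (quadratureFunctional (2 * d) winf s w) (d + 1)).det
      = winf * (hankelMatrix (quadratureFunctional (2 * d) winf s w) d).det := by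
  have hmem : Lagrange.nodal Finset.univ s ∈ R[X]_(d + 1) := by
    rw [degreeLT_succ_eq_degreeLE, mem_degreeLE, ← natDegree_le_iff_degree_le,
      natDegree_nodal_univ_s10 hι]
  set c := (degreeLT.basis R (d + 1)).equivFun ⟨_, hmem⟩
  have hc : c (Fin.last d) = 1 := by
    simpa [c, natDegree_nodal_univ_s10 hι] using
      (Lagrange.nodal_monic (s := Finset.univ) (v := s)).coeff_natDegree
  have hMc : hankelMatrix (quadratureFunctional (2 * d) winf s w) (d + 1) *ᵥ c
      = Pi.single (Fin.last d) winf := by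
    ext i
    rw [hankelMatrix_mulVec_equivFun, quadratureFunctional_X_pow_mul_nodal hι _ _ _ (by omega)]
    simp [Pi.single_apply, Fin.ext_iff]
  rw [Matrix.det_eq_mul_det_submatrix_castSucc _ hc hMc, hankelMatrix_submatrix_castSucc]

end Quadrature

theorem hank_eq_hankelMatrix_of_quadrature {μ : Measure ℝ} {D n : ℕ} (hn : 2 * (n - 1) ≤ D)
    {L : ℝ[X] →ₗ[ℝ] ℝ} (hq : ∀ f : ℝ[X], f.natDegree ≤ D → ∫ t, f.eval t ∂μ = L f) :
    hank μ n 0 = hankelMatrix L n := by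
  ext i j
  have hij : (i : ℕ) + j ≤ D := by omega
  simpa [hank, hankelMatrix, mom] using hq (X ^ ((i : ℕ) + j)) (by simpa using hij)

theorem NonDeg.apply_sq_ne_zero_of_eq_integral {μ : Measure ℝ} {d : ℕ} (hnd : NonDeg μ d)
    {L : ℝ[X] →ₗ[ℝ] ℝ} (hq : ∀ f : ℝ[X], f.natDegree ≤ 2 * d → ∫ t, f.eval t ∂μ = L f)
    (p : ℝ[X]_d) (hp : p ≠ 0) : L ((p : ℝ[X]) ^ 2) ≠ 0 := by
  have hp0 : (p : ℝ[X]) ≠ 0 := by simpa using hp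
  have hdeg : ((p : ℝ[X]) ^ 2).natDegree ≤ 2 * d := by
    have := (natDegree_lt_iff_degree_lt hp0).2 (mem_degreeLT.1 p.2)
    rw [natDegree_pow]
    omega
  rw [← hq _ hdeg]
  exact (hnd.2 _ (pow_ne_zero 2 hp0) hdeg fun x => by rw [eval_pow]; positivity).ne'

theorem stmt10_general (μ : Measure ℝ) (d : ℕ) (hnd : NonDeg μ d)
    (s : Fin d → ℝ) (w : Fin d → ℝ) (winf : ℝ)
    (hq : ∀ f : Polynomial ℝ, f.natDegree ≤ 2 * d →
      ∫ t, f.eval t ∂μ = winf * f.coeff (2 * d) + ∑ i, w i * f.eval (s i)) :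
    winf = (hank μ (d + 1) 0).det / (hank μ d 0).det := by
  set L := quadratureFunctional (2 * d) winf s w
  have hL : ∀ f : ℝ[X], f.natDegree ≤ 2 * d → ∫ t, f.eval t ∂μ = L f := fun f hf => by
    simp [hq f hf, L, quadratureFunctional]
  rw [hank_eq_hankelMatrix_of_quadrature (by omega) hL,
    hank_eq_hankelMatrix_of_quadrature (by omega) hL,
    det_hankelMatrix_quadratureFunctional (Fintype.card_fin d),
    mul_div_cancel_right₀ _ (hankelMatrix_det_ne_zero L (hnd.apply_sq_ne_zero_of_eq_integral hL))]

/-- If μ is non-degenerate in degree d ≥ 1 and there is a quadrature rule of degree 2d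
with a node at infinity, ∫ f dμ = w_∞ ev_∞^{2d}(f) + Σ w_i f(s_i), then
w_∞ = det(M_d)/det(M_{d-1}). -/
theorem stmt10 (μ : Measure ℝ) (d : ℕ) (hd : 1 ≤ d) (hnd : NonDeg μ d)
    (s : Fin d → ℝ) (w : Fin d → ℝ) (winf : ℝ)
    (hw : ∀ i, 0 < w i) (hwinf : 0 < winf)
    (hq : ∀ f : Polynomial ℝ, f.natDegree ≤ 2 * d →
      ∫ t, f.eval t ∂μ = winf * f.coeff (2 * d) + ∑ i, w i * f.eval (s i)) :
    winf = (hank μ (d + 1) 0).det / (hank μ d 0).det :=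
  stmt10_general μ d hnd s w winf hq
end
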